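/- arXiv:2406.19198 — 2 statements merged into one kernel-verified Lean document; each statement's English description precedes it below -/
import Mathlib

section
/- Let (X, 𝒜, μ) be a probability space and let {E_i}_{i∈ℕ} be a sequence of measurable subsets of X. Suppose there exist constants C' > 0 and c > 0 and a sequence of finite subsets S_k ⊆ ℕ with min S_k → +∞ as k → ∞, such that for all sufficiently large k one has ∑_{i∈S_k} μ(E_i) ≥ c and ∑_{s<t, s,t∈S_k} μ(E_s ∩ E_t) ≤ C' (∑_{i∈S_k} μ(E_i))². In addition, suppose property (M1) holds: for any δ > 0 and any natural numbers q₁ < q₂, setting A = ⋃_{j=q₁}^{q₂} E_j, there exists i₀ = i₀(q₁,q₂,δ) such that for all i ≥ i₀ one has μ(A ∩ E_i) ≤ (1+δ) μ(A) μ(E_i). Then μ(E_∞) = 1. -/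
/-!
Suppose some tail union `T = ⋃_{i ≥ q} E_i` had measure `m < 1`, and exhaust it by the finite
unions `A_n = ⋃_{q ≤ j ≤ n} E_j`. By (M1) with `δ = (1 - m) / 2`, for large `i` the pieces
`E_i \ A_n` keep at least the proportion `δ` of `μ(E_i)`, while their pairwise intersections are
still bounded by those of the `E_i`. The Chung–Erdős inequality
`(∑ μ F_i)² ≤ μ(⋃ F_i) · ∑_{s,t} μ(F_s ∩ F_t)` applied to `F_i = E_i \ A_n`, `i ∈ S_k` with `k`
large, then gives `μ(T \ A_n) ≥ δ² c / (1 + 2C'c)` for every `n`, contradicting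
`μ(T \ A_n) → 0`. So every tail union is conull, hence so is their intersection `limsup E_i`.
-/

open MeasureTheory Filter Topology
open scoped ENNReal

theorem Finset.sum_sum_eq_sum_add_two_mul_sum_sum_lt {ι R : Type*} [LinearOrder ι]
    [NonAssocSemiring R] (f : ι → ι → R) (hf : ∀ s t, f s t = f t s) (S : Finset ι) :
    ∑ s ∈ S, ∑ t ∈ S, f s t
      = ∑ s ∈ S, f s s + 2 * ∑ s ∈ S, ∑ t ∈ S, if s < t then f s t else 0 := by
  have hsplit : ∀ s t, f s t = (if s = t then f s s else 0)
      + ((if s < t then f s t else 0) + (if t < s then f t s else 0)) := fun s t => by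
    rcases lt_trichotomy s t with h | rfl | h
    · simp [h, h.ne, h.not_gt]
    · simp
    · simp [h, h.ne', h.not_gt, hf s t]
  simp only [Finset.sum_congr rfl fun s _ => Finset.sum_congr rfl fun t _ => hsplit s t,
    Finset.sum_add_distrib, Finset.sum_ite_eq]
  rw [Finset.sum_comm (f := fun s t => if t < s then f t s else 0), two_mul]
  exact congrArg₂ _ (Finset.sum_congr rfl fun s hs => if_pos hs) rfl

theorem biUnion_Icc_subset_iUnion_ge {X : Type*} (E : ℕ → Set X) (q n : ℕ) :
    ⋃ j ∈ Finset.Icc q n, E j ⊆ ⋃ i ≥ q, E i :=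
  Set.iUnion₂_subset fun _ hj => Set.subset_biUnion_of_mem (Finset.mem_Icc.1 hj).1

section ChungErdos

variable {X : Type*} [MeasurableSpace X] (μ : Measure X)

theorem sq_lintegral_le_measure_mul_lintegral_sq {f : X → ℝ≥0∞} (hf : AEMeasurable f μ)
    {U : Set X} (hU : MeasurableSet U) (hfU : ∀ x ∉ U, f x = 0) :
    (∫⁻ x, f x ∂μ) ^ 2 ≤ μ U * ∫⁻ x, f x ^ 2 ∂μ := by
  have hfg : f * U.indicator 1 = f := funext fun x => by
    by_cases hx : x ∈ U <;> simp [hx, hfU]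
  have hg : ∀ x, U.indicator (1 : X → ℝ≥0∞) x ^ 2 = U.indicator 1 x := fun x => by
    by_cases hx : x ∈ U <;> simp [hx]
  have holder := ENNReal.lintegral_mul_le_Lp_mul_Lq μ Real.HolderConjugate.two_two hf
    (g := U.indicator 1) (aemeasurable_one.indicator hU)
  simp only [hfg, ENNReal.rpow_two, hg, lintegral_indicator_one hU] at holder
  calc (∫⁻ x, f x ∂μ) ^ 2
      ≤ ((∫⁻ x, f x ^ 2 ∂μ) ^ (1 / 2 : ℝ) * μ U ^ (1 / 2 : ℝ)) ^ 2 := by gcongr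
    _ = μ U * ∫⁻ x, f x ^ 2 ∂μ := by
      rw [mul_pow, ← ENNReal.rpow_two, ← ENNReal.rpow_two, ← ENNReal.rpow_mul,
        ← ENNReal.rpow_mul]
      norm_num [mul_comm]

theorem lintegral_sum_indicator_one {ι : Type*} {F : ι → Set X} (hF : ∀ i, MeasurableSet (F i))
    (S : Finset ι) : ∫⁻ x, ∑ i ∈ S, (F i).indicator 1 x ∂μ = ∑ i ∈ S, μ (F i) := by
  rw [lintegral_finsetSum _ fun i _ => measurable_one.indicator (hF i)]
  exact Finset.sum_congr rfl fun i _ => lintegral_indicator_one (hF i)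

/-- The Chung–Erdős inequality: Cauchy–Schwarz for the counting function `∑ 1_{F i}`, which
vanishes off `⋃ F i`. -/
theorem sq_sum_measure_le_measure_biUnion_mul {ι : Type*} {F : ι → Set X}
    (hF : ∀ i, MeasurableSet (F i)) (S : Finset ι) :
    (∑ i ∈ S, μ (F i)) ^ 2 ≤ μ (⋃ i ∈ S, F i) * ∑ s ∈ S, ∑ t ∈ S, μ (F s ∩ F t) := by
  have hcount_sq : ∀ x, (∑ i ∈ S, (F i).indicator 1 x) ^ 2
      = ∑ s ∈ S, ∑ t ∈ S, (F s ∩ F t).indicator (1 : X → ℝ≥0∞) x := fun x => by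
    simp only [sq, Finset.sum_mul_sum, Set.inter_indicator_one, Pi.mul_apply]
  have key := sq_lintegral_le_measure_mul_lintegral_sq μ
    (Finset.measurable_sum _ fun i _ => measurable_one.indicator (hF i)).aemeasurable
    (MeasurableSet.biUnion S.countable_toSet fun i _ => hF i)
    (fun x hx => Finset.sum_eq_zero fun i hi =>
      Set.indicator_of_notMem (fun hxi => hx (Set.mem_biUnion hi hxi)) _)
  simp only [hcount_sq, lintegral_finsetSum _ fun s _ => Finset.measurable_sum _ fun t _ =>
    measurable_one.indicator ((hF s).inter (hF t))] at key
  rwa [lintegral_sum_indicator_one μ hF, Finset.sum_congr rfl fun s _ =>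
    lintegral_sum_indicator_one μ (fun t => (hF s).inter (hF t)) S] at key

theorem sq_sum_measureReal_le_measureReal_biUnion_mul [IsFiniteMeasure μ] {ι : Type*}
    {F : ι → Set X} (hF : ∀ i, MeasurableSet (F i)) (S : Finset ι) :
    (∑ i ∈ S, μ.real (F i)) ^ 2
      ≤ μ.real (⋃ i ∈ S, F i) * ∑ s ∈ S, ∑ t ∈ S, μ.real (F s ∩ F t) := by
  have h := ENNReal.toReal_mono
    (ENNReal.mul_ne_top (measure_ne_top _ _) (by simp [ENNReal.sum_eq_top, measure_ne_top]))
    (sq_sum_measure_le_measure_biUnion_mul μ hF S)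
  simpa [measureReal_def, ENNReal.toReal_sum, measure_ne_top] using h

end ChungErdos

section FiniteMeasure

variable {X : Type*} [MeasurableSpace X] (μ : Measure X) [IsFiniteMeasure μ]

/-- With `T = ∑ μ(E i) ≥ c`, Chung–Erdős and `∑_{s,t} μ(F s ∩ F t) ≤ T + 2C'T²` give
`μ(⋃ F i) ≥ b² T / (1 + 2C'T)`, which is increasing in `T`. -/
theorem sq_mul_div_le_measureReal_biUnion {ι : Type*} [LinearOrder ι] {E F : ι → Set X}
    (hF : ∀ i, MeasurableSet (F i)) (hFE : ∀ i, F i ⊆ E i) {S : Finset ι} {b c C' : ℝ}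
    (hb : 0 ≤ b) (hc : 0 < c) (hC' : 0 ≤ C') (hbF : ∀ i ∈ S, b * μ.real (E i) ≤ μ.real (F i))
    (hmass : c ≤ ∑ i ∈ S, μ.real (E i))
    (hpair : ∑ s ∈ S, ∑ t ∈ S, (if s < t then μ.real (E s ∩ E t) else 0)
      ≤ C' * (∑ i ∈ S, μ.real (E i)) ^ 2) :
    b ^ 2 * (c / (1 + 2 * C' * c)) ≤ μ.real (⋃ i ∈ S, F i) := by
  set T := ∑ i ∈ S, μ.real (E i)
  set u := μ.real (⋃ i ∈ S, F i)
  have hT : 0 < T := hc.trans_le hmass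
  have hbT : b * T ≤ ∑ i ∈ S, μ.real (F i) := by
    rw [Finset.mul_sum]
    exact Finset.sum_le_sum hbF
  have hpairF : ∑ s ∈ S, ∑ t ∈ S, μ.real (F s ∩ F t) ≤ T + 2 * C' * T ^ 2 := calc
    _ ≤ ∑ s ∈ S, ∑ t ∈ S, μ.real (E s ∩ E t) :=
      Finset.sum_le_sum fun s _ => Finset.sum_le_sum fun t _ =>
        measureReal_mono (Set.inter_subset_inter (hFE s) (hFE t))
    _ = T + 2 * ∑ s ∈ S, ∑ t ∈ S, (if s < t then μ.real (E s ∩ E t) else 0) := by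
      rw [Finset.sum_sum_eq_sum_add_two_mul_sum_sum_lt _ fun s t => by rw [Set.inter_comm]]
      simp only [Set.inter_self, T]
    _ ≤ T + 2 * C' * T ^ 2 := by linarith
  have hbu : b ^ 2 * T ≤ u * (1 + 2 * C' * T) := by
    have : (b * T) ^ 2 ≤ u * (T + 2 * C' * T ^ 2) :=
      (pow_le_pow_left₀ (by positivity) hbT 2).trans
        ((sq_sum_measureReal_le_measureReal_biUnion_mul μ hF S).trans (by gcongr))
    nlinarith
  rw [← mul_div_assoc, div_le_iff₀ (by positivity)]
  nlinarith [measureReal_nonneg (μ := μ) (s := ⋃ i ∈ S, F i)]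

theorem mul_measureReal_le_measureReal_sdiff {A E : Set X} (hA : MeasurableSet A) {b : ℝ}
    (h : μ.real (A ∩ E) ≤ (1 - b) * μ.real E) : b * μ.real E ≤ μ.real (E \ A) := by
  have hsplit := measureReal_inter_add_sdiff (μ := μ) (s := E) hA
  rw [Set.inter_comm] at h
  linarith

theorem sq_mul_div_le_measureReal_iUnion_ge_sdiff {E : ℕ → Set X}
    (hE : ∀ i, MeasurableSet (E i)) {S : ℕ → Finset ℕ} {b c C' : ℝ}
    (hb : 0 ≤ b) (hc : 0 < c) (hC' : 0 ≤ C')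
    (hmin : ∀ N : ℕ, ∀ᶠ k in atTop, ∀ i ∈ S k, N ≤ i)
    (hmass : ∀ᶠ k in atTop, c ≤ ∑ i ∈ S k, μ.real (E i))
    (hpair : ∀ᶠ k in atTop, ∑ s ∈ S k, ∑ t ∈ S k, (if s < t then μ.real (E s ∩ E t) else 0)
      ≤ C' * (∑ i ∈ S k, μ.real (E i)) ^ 2)
    {A : Set X} (hA : MeasurableSet A)
    (hAE : ∀ᶠ i in atTop, μ.real (A ∩ E i) ≤ (1 - b) * μ.real (E i)) (q : ℕ) :
    b ^ 2 * (c / (1 + 2 * C' * c)) ≤ μ.real ((⋃ i ≥ q, E i) \ A) := by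
  obtain ⟨i₀, hi₀⟩ := eventually_atTop.1 hAE
  obtain ⟨k, hk, hmass_k, hpair_k⟩ := ((hmin (max q i₀)).and (hmass.and hpair)).exists
  calc _ ≤ μ.real (⋃ i ∈ S k, E i \ A) :=
        sq_mul_div_le_measureReal_biUnion μ (fun i => (hE i).diff hA) (fun i => Set.sdiff_subset)
          hb hc hC' (fun i hi => mul_measureReal_le_measureReal_sdiff μ hA
            (hi₀ i (le_of_max_le_right (hk i hi)))) hmass_k hpair_k
    _ ≤ μ.real ((⋃ i ≥ q, E i) \ A) := measureReal_mono <| Set.iUnion₂_subset fun i hi =>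
        Set.sdiff_subset_sdiff_left (Set.subset_biUnion_of_mem (le_of_max_le_left (hk i hi)))

theorem tendsto_measureReal_iUnion_ge_sdiff_biUnion_Icc {E : ℕ → Set X}
    (hE : ∀ i, MeasurableSet (E i)) (q : ℕ) :
    Tendsto (fun n => μ.real ((⋃ i ≥ q, E i) \ ⋃ j ∈ Finset.Icc q n, E j)) atTop (𝓝 0) := by
  have hmono : Monotone fun n => ⋃ j ∈ Finset.Icc q n, E j := fun m n hmn =>
    Set.biUnion_subset_biUnion_left (Finset.coe_subset.2 (Finset.Icc_subset_Icc_right hmn))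
  have hunion : ⋃ n, ⋃ j ∈ Finset.Icc q n, E j = ⋃ i ≥ q, E i :=
    (Set.iUnion_subset fun n => biUnion_Icc_subset_iUnion_ge E q n).antisymm
      (Set.iUnion₂_subset fun i hi => Set.subset_iUnion_of_subset i
        (Set.subset_biUnion_of_mem (Finset.mem_Icc.2 ⟨hi, le_rfl⟩)))
  have hA := (ENNReal.tendsto_toReal (measure_ne_top μ _)).comp
    (tendsto_measure_iUnion_atTop hmono)
  rw [hunion] at hA
  have h : Tendsto (fun n => μ.real (⋃ i ≥ q, E i) - μ.real (⋃ j ∈ Finset.Icc q n, E j)) atTop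
      (𝓝 (μ.real (⋃ i ≥ q, E i) - μ.real (⋃ i ≥ q, E i))) := tendsto_const_nhds.sub hA
  rw [sub_self] at h
  exact h.congr fun n => (measureReal_sdiff (biUnion_Icc_subset_iUnion_ge E q n)
    (Finset.measurableSet_biUnion _ fun j _ => hE j) (measure_ne_top μ _)).symm

end FiniteMeasure

theorem measure_limsup_eq_one_of_measureReal_iUnion_ge {X : Type*} [MeasurableSpace X]
    (μ : Measure X) [IsProbabilityMeasure μ] {E : ℕ → Set X} (hE : ∀ i, MeasurableSet (E i))
    (h : ∀ q, μ.real (⋃ i ≥ q, E i) = 1) :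
    μ (limsup E atTop) = 1 := by
  have htail : ∀ q, MeasurableSet (⋃ i ≥ q, E i) := fun q =>
    MeasurableSet.biUnion (Set.to_countable _) fun i _ => hE i
  simp only [limsup_eq_iInf_iSup_of_nat, Set.iInf_eq_iInter, Set.iSup_eq_iUnion]
  rw [← prob_compl_eq_zero_iff (MeasurableSet.iInter htail), Set.compl_iInter]
  exact measure_iUnion_null fun q =>
    (prob_compl_eq_zero_iff (htail q)).2 ((ENNReal.toReal_eq_one_iff _).1 (h q))

/-- **Generalised divergence Borel--Cantelli with property (M1) gives full measure**
(Theorem 2). -/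
theorem generalised_divergence_borel_cantelli_M1_full_measure
    {X : Type*} [MeasurableSpace X] (μ : Measure X) [IsProbabilityMeasure μ]
    (E : ℕ → Set X) (hE : ∀ i, MeasurableSet (E i))
    (C' c : ℝ) (hC' : 0 < C') (hc : 0 < c)
    (S : ℕ → Finset ℕ)
    (hmin : ∀ N : ℕ, ∀ᶠ k in atTop, ∀ i ∈ S k, N ≤ i)
    (hmass : ∀ᶠ k in atTop, c ≤ ∑ i ∈ S k, (μ (E i)).toReal)
    (hpair : ∀ᶠ k in atTop,
      ∑ s ∈ S k, ∑ t ∈ S k, (if s < t then (μ (E s ∩ E t)).toReal else 0)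
        ≤ C' * (∑ i ∈ S k, (μ (E i)).toReal) ^ 2)
    (hM1 : ∀ δ : ℝ, 0 < δ → ∀ q₁ q₂ : ℕ, q₁ < q₂ →
      ∃ i₀ : ℕ, ∀ i ≥ i₀,
        (μ ((⋃ j ∈ Finset.Icc q₁ q₂, E j) ∩ E i)).toReal
          ≤ (1 + δ) * (μ (⋃ j ∈ Finset.Icc q₁ q₂, E j)).toReal * (μ (E i)).toReal) :
    μ (limsup E atTop) = 1 := by
  refine measure_limsup_eq_one_of_measureReal_iUnion_ge μ hE fun q => ?_
  by_contra hq
  set m := μ.real (⋃ i ≥ q, E i)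
  have hm : m < 1 := measureReal_le_one.lt_of_ne hq
  set δ := (1 - m) / 2 with hδ_def
  have hδ : 0 < δ := by linarith
  have hbound : ∀ n > q, δ ^ 2 * (c / (1 + 2 * C' * c))
      ≤ μ.real ((⋃ i ≥ q, E i) \ ⋃ j ∈ Finset.Icc q n, E j) := fun n hn => by
    obtain ⟨i₀, hi₀⟩ := hM1 δ hδ q n hn
    refine sq_mul_div_le_measureReal_iUnion_ge_sdiff μ hE hδ.le hc hC'.le hmin hmass hpair
      (Finset.measurableSet_biUnion _ fun j _ => hE j)
      (eventually_atTop.2 ⟨i₀, fun i hi => (hi₀ i hi).trans ?_⟩) q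
    have hAm : μ.real (⋃ j ∈ Finset.Icc q n, E j) ≤ m :=
      measureReal_mono (biUnion_Icc_subset_iUnion_ge E q n) (measure_ne_top μ _)
    refine mul_le_mul_of_nonneg_right ?_ measureReal_nonneg
    change (1 + δ) * μ.real _ ≤ 1 - δ
    nlinarith [measureReal_nonneg (μ := μ) (s := ⋃ j ∈ Finset.Icc q n, E j)]
  obtain ⟨n, hn_small, hn⟩ := (((tendsto_measureReal_iUnion_ge_sdiff_biUnion_Icc μ hE q).eventually
    (gt_mem_nhds (by positivity : 0 < δ ^ 2 * (c / (1 + 2 * C' * c))))).and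
      (eventually_gt_atTop q)).exists
  exact (hbound n hn).not_gt hn_small
end

section
/- Let (X, 𝒜, μ) be a probability space and let {E_i}_{i∈ℕ} be a sequence of measurable subsets of X. Suppose there exists a constant C' > 0 such that for any ε > 0 there exist 0 < ε* < ε and a sequence of finite subsets S_k^ε ⊆ ℕ with min S_k^ε → +∞ as k → ∞, such that for all sufficiently large k one has ε* ≤ ∑_{i∈S_k^ε} μ(E_i) ≤ ε and ∑_{s<t, s,t∈S_k^ε} μ(E_s ∩ E_t) ≤ C' (∑_{i∈S_k^ε} μ(E_i))². Furthermore suppose property (M2) holds: for any δ > 0 and every pair of integers q₁ < q₂, setting A = ⋃_{j=q₁}^{q₂} E_j, there exists k₀ = k₀(q₁,q₂,δ) such that for all k ≥ k₀ one has μ(A ∩ ⋃_{i∈S_k^ε} E_i) ≤ (1+δ) μ(A) ∑_{i∈S_k^ε} μ(E_i). Then μ(E_∞) = 1. -/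
/-!
Fix `N`, let `F = ⋃_{j ≥ N} E_j` and `A_q = ⋃_{N ≤ j ≤ q} E_j`. For `k` large, the group
`U = ⋃_{i ∈ S_k} E_i` lies in `F` and has mass `m = ∑_{i ∈ S_k} μ(E_i) ∈ [ε*, ε]`; the
Chung–Erdős inequality together with the pair-correlation bound gives `μ U ≥ m / c` with
`c = 1 + 2C'ε`. As `A_q ∪ U ⊆ F`, inclusion–exclusion and (M2) give
`c (μ F - μ A_q) ≥ m (1 - (1 + δ) c μ A_q)`. Since `μ A_q → μ F` while `m ≥ ε* > 0`, this forces
`(1 + δ) c μ F ≥ 1`; letting `ε, δ → 0` gives `μ F = 1` for every `N`, hence `μ (limsup E) = 1`.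
-/

open MeasureTheory Filter ENNReal Topology

section

variable {X : Type*} [MeasurableSpace X] (μ : Measure X)

theorem sq_setLIntegral_le_measure_mul_setLIntegral_sq {f : X → ℝ≥0∞} (A : Set X)
    (hf : AEMeasurable f (μ.restrict A)) :
    (∫⁻ x in A, f x ∂μ) ^ 2 ≤ μ A * ∫⁻ x in A, f x ^ 2 ∂μ := by
  have holder := ENNReal.lintegral_mul_le_Lp_mul_Lq (μ.restrict A) Real.HolderConjugate.two_two
    hf (aemeasurable_const (b := (1 : ℝ≥0∞)))
  simp only [Pi.mul_apply, mul_one, one_rpow, lintegral_const, Measure.restrict_apply_univ,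
    one_mul] at holder
  calc (∫⁻ x in A, f x ∂μ) ^ 2
      ≤ ((∫⁻ x in A, f x ^ (2 : ℝ) ∂μ) ^ (1 / 2 : ℝ) * μ A ^ (1 / 2 : ℝ)) ^ 2 := by gcongr
    _ = μ A * ∫⁻ x in A, f x ^ 2 ∂μ := by
      rw [mul_pow, ← ENNReal.rpow_natCast, ← ENNReal.rpow_natCast, ← ENNReal.rpow_mul,
        ← ENNReal.rpow_mul]
      norm_num [mul_comm]

/-- The Chung–Erdős inequality. -/
theorem sq_sum_measure_le_measure_biUnion_mul_sum_sum {ι : Type*} (s : Finset ι) {E : ι → Set X}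
    (hE : ∀ i ∈ s, MeasurableSet (E i)) :
    (∑ i ∈ s, μ (E i)) ^ 2 ≤ μ (⋃ i ∈ s, E i) * ∑ i ∈ s, ∑ j ∈ s, μ (E i ∩ E j) := by
  set A := ⋃ i ∈ s, E i
  set f : X → ℝ≥0∞ := fun x => ∑ i ∈ s, (E i).indicator 1 x
  have hsupp : f.support ⊆ A := Function.support_subset_iff'.2 fun x hx =>
    Finset.sum_eq_zero fun i hi =>
      Set.indicator_of_notMem (fun hxi => hx (Set.mem_biUnion hi hxi)) _
  have hsupp_sq : (fun x => f x ^ 2).support ⊆ A := by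
    rwa [Function.support_pow _ two_ne_zero]
  have hf_sq : ∀ x, f x ^ 2 = ∑ i ∈ s, ∑ j ∈ s, (E i ∩ E j).indicator 1 x := fun x => by
    simp only [f, sq, Finset.sum_mul_sum, Set.inter_indicator_one, Pi.mul_apply]
  have hint : ∫⁻ x in A, f x ∂μ = ∑ i ∈ s, μ (E i) := by
    rw [setLIntegral_eq_of_support_subset hsupp,
      lintegral_finsetSum' _ fun i hi => (measurable_one.indicator (hE i hi)).aemeasurable]
    exact Finset.sum_congr rfl fun i hi => lintegral_indicator_one (hE i hi)
  have hint_sq : ∫⁻ x in A, f x ^ 2 ∂μ = ∑ i ∈ s, ∑ j ∈ s, μ (E i ∩ E j) := by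
    rw [setLIntegral_eq_of_support_subset hsupp_sq]
    simp_rw [hf_sq]
    rw [lintegral_finsetSum' _ fun i hi => ?_]
    · refine Finset.sum_congr rfl fun i hi => ?_
      rw [lintegral_finsetSum' _ fun j hj =>
        (measurable_one.indicator ((hE i hi).inter (hE j hj))).aemeasurable]
      exact Finset.sum_congr rfl fun j hj => lintegral_indicator_one ((hE i hi).inter (hE j hj))
    · exact (Finset.measurable_sum _ fun j hj =>
        measurable_one.indicator ((hE i hi).inter (hE j hj))).aemeasurable
  rw [← hint, ← hint_sq]
  exact sq_setLIntegral_le_measure_mul_setLIntegral_sq μ A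
    (Finset.measurable_sum _ fun i hi => measurable_one.indicator (hE i hi)).aemeasurable

theorem Finset.sum_sum_eq_sum_add_two_nsmul_sum_sum_lt {ι M : Type*} [LinearOrder ι]
    [AddCommMonoid M] (s : Finset ι) (p : ι → ι → M) (hp : ∀ i j, p i j = p j i) :
    ∑ i ∈ s, ∑ j ∈ s, p i j
      = ∑ i ∈ s, p i i + 2 • ∑ i ∈ s, ∑ j ∈ s, if i < j then p i j else 0 := by
  have hsplit : ∀ i j, p i j = ((if i < j then p i j else 0) + if j < i then p j i else 0)
      + if i = j then p i j else 0 := by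
    intro i j
    rcases lt_trichotomy i j with hij | rfl | hij
    · simp [hij, hij.not_gt, hij.ne]
    · simp
    · simp [hij, hij.not_gt, hij.ne', hp i j]
  have hdiag : ∑ i ∈ s, ∑ j ∈ s, (if i = j then p i j else 0) = ∑ i ∈ s, p i i :=
    Finset.sum_congr rfl fun i hi => by rw [Finset.sum_ite_eq s i (p i), if_pos hi]
  rw [Finset.sum_congr rfl fun i _ => Finset.sum_congr rfl fun j _ => hsplit i j]
  simp only [Finset.sum_add_distrib, hdiag, two_nsmul]
  rw [Finset.sum_comm (f := fun i j => if j < i then p j i else 0)]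
  abel

theorem sum_measureReal_le_measureReal_biUnion_mul [IsFiniteMeasure μ] {ι : Type*} [LinearOrder ι]
    (s : Finset ι) {E : ι → Set X} (hE : ∀ i ∈ s, MeasurableSet (E i)) {C : ℝ}
    (hpair : ∑ i ∈ s, ∑ j ∈ s, (if i < j then μ.real (E i ∩ E j) else 0)
      ≤ C * (∑ i ∈ s, μ.real (E i)) ^ 2) :
    ∑ i ∈ s, μ.real (E i) ≤ μ.real (⋃ i ∈ s, E i) * (1 + 2 * C * ∑ i ∈ s, μ.real (E i)) := by
  set m := ∑ i ∈ s, μ.real (E i)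
  have hCE : m ^ 2 ≤ μ.real (⋃ i ∈ s, E i) * ∑ i ∈ s, ∑ j ∈ s, μ.real (E i ∩ E j) := by
    simpa [m, Measure.real, ENNReal.toReal_sum, ENNReal.toReal_mul, ENNReal.toReal_pow,
      ENNReal.sum_ne_top, measure_ne_top] using
      ENNReal.toReal_mono (mul_ne_top (measure_ne_top _ _)
        (sum_ne_top.2 fun _ _ => sum_ne_top.2 fun _ _ => measure_ne_top _ _))
        (sq_sum_measure_le_measure_biUnion_mul_sum_sum μ s hE)
  have hdecomp := Finset.sum_sum_eq_sum_add_two_nsmul_sum_sum_lt s (fun i j => μ.real (E i ∩ E j))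
    fun i j => by rw [Set.inter_comm]
  simp only [Set.inter_self, nsmul_eq_mul, Nat.cast_ofNat] at hdecomp
  rcases (show 0 ≤ m by positivity).eq_or_lt with hm | hm
  · rw [← hm]; simp
  · refine le_of_mul_le_mul_left ?_ hm
    nlinarith [measureReal_nonneg (μ := μ) (s := ⋃ i ∈ s, E i)]

theorem mul_one_sub_le_mul_measureReal_sub [IsFiniteMeasure μ] {A U B : Set X}
    (hU : MeasurableSet U) (hAB : A ⊆ B) (hUB : U ⊆ B) {K c m : ℝ} (hc : 0 ≤ c)
    (hAU : μ.real (A ∩ U) ≤ K * μ.real A * m) (hm : m ≤ μ.real U * c) :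
    m * (1 - K * c * μ.real A) ≤ c * (μ.real B - μ.real A) := by
  have hunion : μ.real (A ∪ U) + μ.real (A ∩ U) = μ.real A + μ.real U :=
    measureReal_union_add_inter hU
  have hB : μ.real (A ∪ U) ≤ μ.real B := measureReal_mono (Set.union_subset hAB hUB)
  nlinarith [mul_le_mul_of_nonneg_left hAU hc]

theorem tendsto_measureReal_biUnion_Icc (E : ℕ → Set X) [IsFiniteMeasure μ] (N : ℕ) :
    Tendsto (fun q => μ.real (⋃ j ∈ Finset.Icc N q, E j)) atTop (𝓝 (μ.real (⋃ j ≥ N, E j))) := by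
  have hmono : Monotone fun q => ⋃ j ∈ Finset.Icc N q, E j := fun p q hpq =>
    Set.biUnion_subset_biUnion_left (Finset.Icc_subset_Icc_right hpq)
  have hunion : ⋃ q, ⋃ j ∈ Finset.Icc N q, E j = ⋃ j ≥ N, E j := by
    ext x
    simp only [Set.mem_iUnion, Finset.mem_Icc, exists_prop]
    exact ⟨fun ⟨_, j, ⟨hNj, _⟩, hx⟩ => ⟨j, hNj, hx⟩, fun ⟨j, hNj, hx⟩ => ⟨j, j, ⟨hNj, le_rfl⟩, hx⟩⟩
  have h := tendsto_measure_iUnion_atTop (μ := μ) hmono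
  rw [hunion] at h
  exact (ENNReal.tendsto_toReal (measure_ne_top μ _)).comp h

theorem one_le_mul_measureReal_iUnion_ge_of_forall_gt [IsFiniteMeasure μ] {E : ℕ → Set X}
    (hE : ∀ i, MeasurableSet (E i)) {K c εs : ℝ} (hK : 0 ≤ K) (hc : 0 ≤ c) (hεs : 0 < εs) (N : ℕ)
    (hT : ∀ q > N, ∃ T : Finset ℕ, (∀ i ∈ T, N ≤ i) ∧ εs ≤ ∑ i ∈ T, μ.real (E i) ∧
      ∑ i ∈ T, μ.real (E i) ≤ μ.real (⋃ i ∈ T, E i) * c ∧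
      μ.real ((⋃ j ∈ Finset.Icc N q, E j) ∩ ⋃ i ∈ T, E i)
        ≤ K * μ.real (⋃ j ∈ Finset.Icc N q, E j) * ∑ i ∈ T, μ.real (E i)) :
    1 ≤ K * c * μ.real (⋃ j ≥ N, E j) := by
  set F := ⋃ j ≥ N, E j
  set A : ℕ → Set X := fun q => ⋃ j ∈ Finset.Icc N q, E j
  have hAF : ∀ q, A q ⊆ F := fun q => Set.biUnion_subset_biUnion_left fun j hj =>
    (Finset.mem_Icc.1 hj).1
  by_contra! hlt
  have hgap : ∀ q > N, εs * (1 - K * c * μ.real F) ≤ c * (μ.real F - μ.real (A q)) := by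
    intro q hq
    obtain ⟨T, hTN, hεsT, hTc, hM2⟩ := hT q hq
    have hTF : ⋃ i ∈ T, E i ⊆ F := Set.biUnion_subset_biUnion_left hTN
    have hAq : K * c * μ.real (A q) ≤ K * c * μ.real F :=
      mul_le_mul_of_nonneg_left (measureReal_mono (hAF q) (measure_ne_top μ F)) (mul_nonneg hK hc)
    calc εs * (1 - K * c * μ.real F)
        ≤ (∑ i ∈ T, μ.real (E i)) * (1 - K * c * μ.real (A q)) := by
          gcongr
      _ ≤ c * (μ.real F - μ.real (A q)) :=
          mul_one_sub_le_mul_measureReal_sub μ (T.measurableSet_biUnion fun i _ => hE i)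
            (hAF q) hTF hc hM2 hTc
  have hlim : Tendsto (fun q => c * (μ.real F - μ.real (A q))) atTop
      (𝓝 (c * (μ.real F - μ.real F))) :=
    (tendsto_const_nhds.sub (tendsto_measureReal_biUnion_Icc μ E N)).const_mul c
  have := ge_of_tendsto hlim (eventually_gt_atTop N |>.mono hgap)
  simp only [sub_self, mul_zero] at this
  nlinarith

theorem one_le_mul_measureReal_iUnion_ge_of_M2 [IsFiniteMeasure μ] {E : ℕ → Set X}
    (hE : ∀ i, MeasurableSet (E i)) {C' : ℝ} (hC' : 0 ≤ C')
    (h : ∀ ε : ℝ, 0 < ε → ∃ εs : ℝ, 0 < εs ∧ εs < ε ∧ ∃ S : ℕ → Finset ℕ,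
      (∀ N : ℕ, ∀ᶠ k in atTop, ∀ i ∈ S k, N ≤ i) ∧
      (∀ᶠ k in atTop,
        εs ≤ ∑ i ∈ S k, (μ (E i)).toReal ∧ ∑ i ∈ S k, (μ (E i)).toReal ≤ ε) ∧
      (∀ᶠ k in atTop,
        ∑ s ∈ S k, ∑ t ∈ S k, (if s < t then (μ (E s ∩ E t)).toReal else 0)
          ≤ C' * (∑ i ∈ S k, (μ (E i)).toReal) ^ 2) ∧
      (∀ δ : ℝ, 0 < δ → ∀ q₁ q₂ : ℕ, q₁ < q₂ → ∃ k₀ : ℕ, ∀ k ≥ k₀,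
        (μ ((⋃ j ∈ Finset.Icc q₁ q₂, E j) ∩ ⋃ i ∈ S k, E i)).toReal
          ≤ (1 + δ) * (μ (⋃ j ∈ Finset.Icc q₁ q₂, E j)).toReal
              * ∑ i ∈ S k, (μ (E i)).toReal))
    {ε δ : ℝ} (hε : 0 < ε) (hδ : 0 < δ) (N : ℕ) :
    1 ≤ (1 + δ) * (1 + 2 * C' * ε) * μ.real (⋃ j ≥ N, E j) := by
  obtain ⟨εs, hεs, -, S, hmin, hbounds, hpair, hM2⟩ := h ε hε
  refine one_le_mul_measureReal_iUnion_ge_of_forall_gt μ hE (by positivity) (by positivity) hεs N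
    fun q hq => ?_
  obtain ⟨k₀, hk₀⟩ := hM2 δ hδ N q hq
  obtain ⟨k, ⟨hkN, ⟨hkεs, hkε⟩, hkpair⟩, hkk₀⟩ :=
    ((hmin N).and (hbounds.and hpair) |>.and (eventually_ge_atTop k₀)).exists
  refine ⟨S k, hkN, hkεs, ?_, hk₀ k hkk₀⟩
  calc ∑ i ∈ S k, μ.real (E i)
      ≤ μ.real (⋃ i ∈ S k, E i) * (1 + 2 * C' * ∑ i ∈ S k, μ.real (E i)) :=
        sum_measureReal_le_measureReal_biUnion_mul μ (S k) (fun i _ => hE i) hkpair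
    _ ≤ μ.real (⋃ i ∈ S k, E i) * (1 + 2 * C' * ε) := by gcongr; exact hkε

theorem measure_limsup_atTop_eq_one_of_forall [IsProbabilityMeasure μ] {E : ℕ → Set X}
    (hE : ∀ i, MeasurableSet (E i)) (h : ∀ N, μ (⋃ j ≥ N, E j) = 1) :
    μ (limsup E atTop) = 1 := by
  have hF : ∀ N, MeasurableSet (⋃ j ≥ N, E j) := fun N =>
    .biUnion (Set.to_countable _) fun j _ => hE j
  rw [limsup_eq_iInf_iSup_of_nat]
  exact (mem_ae_iff_prob_eq_one (.iInter hF)).1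
    (countable_iInter_mem.2 fun N => (mem_ae_iff_prob_eq_one (hF N)).2 (h N))

end

/-- **Borel--Cantelli with grouped events and property (M2)** (Theorem 3). -/
theorem borel_cantelli_M2_full_measure
    {X : Type*} [MeasurableSpace X] (μ : Measure X) [IsProbabilityMeasure μ]
    (E : ℕ → Set X) (hE : ∀ i, MeasurableSet (E i))
    (C' : ℝ) (hC' : 0 < C')
    (h : ∀ ε : ℝ, 0 < ε → ∃ εs : ℝ, 0 < εs ∧ εs < ε ∧ ∃ S : ℕ → Finset ℕ,
      (∀ N : ℕ, ∀ᶠ k in atTop, ∀ i ∈ S k, N ≤ i) ∧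
      (∀ᶠ k in atTop,
        εs ≤ ∑ i ∈ S k, (μ (E i)).toReal ∧ ∑ i ∈ S k, (μ (E i)).toReal ≤ ε) ∧
      (∀ᶠ k in atTop,
        ∑ s ∈ S k, ∑ t ∈ S k, (if s < t then (μ (E s ∩ E t)).toReal else 0)
          ≤ C' * (∑ i ∈ S k, (μ (E i)).toReal) ^ 2) ∧
      (∀ δ : ℝ, 0 < δ → ∀ q₁ q₂ : ℕ, q₁ < q₂ → ∃ k₀ : ℕ, ∀ k ≥ k₀,
        (μ ((⋃ j ∈ Finset.Icc q₁ q₂, E j) ∩ ⋃ i ∈ S k, E i)).toReal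
          ≤ (1 + δ) * (μ (⋃ j ∈ Finset.Icc q₁ q₂, E j)).toReal
              * ∑ i ∈ S k, (μ (E i)).toReal)) :
    μ (limsup E atTop) = 1 := by
  refine measure_limsup_atTop_eq_one_of_forall μ hE fun N => ?_
  set t := μ.real (⋃ j ≥ N, E j)
  set u : ℕ → ℝ := fun n => 1 / ((n : ℝ) + 1)
  have hu : Tendsto u atTop (𝓝 0) := tendsto_one_div_add_atTop_nhds_zero_nat
  have hlim : Tendsto (fun n => (1 + u n) * (1 + 2 * C' * u n) * t) atTop
      (𝓝 ((1 + 0) * (1 + 2 * C' * 0) * t)) :=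
    ((tendsto_const_nhds.add hu).mul (tendsto_const_nhds.add (hu.const_mul _))).mul_const t
  have h1t : 1 ≤ t := by
    simpa using ge_of_tendsto hlim (.of_forall fun n =>
      one_le_mul_measureReal_iUnion_ge_of_M2 μ hE hC'.le h Nat.one_div_pos_of_nat
        Nat.one_div_pos_of_nat N)
  exact (ENNReal.toReal_eq_one_iff _).1 (le_antisymm measureReal_le_one h1t)
end
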